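/- Let (σ_k)_{k ∈ Fin n} be an abelian maximal CDP family (so σ_0 = id and there is a permutation ξ of Fin n with σ_{ξ(i)} = σ_i⁻¹ for all i), and let (A^k)_{k ∈ Fin n} be matrices in Matrix (Fin n) (Fin n) ℂ with entries (A^k)_{ij} = a_{ij}^k. Then the partial transpose of the CDP matrix satisfies ρ[𝒜,Σ]^{T₂} = ρ[𝒜̃,Σ'], where Σ' is the maximal CDP family σ'_k = σ_k ∘ ξ and 𝒜̃ = (Ã^k) is given by (Ã^k)_{ij} = a_{ij}^{σ_i⁻¹(σ_j⁻¹(k))}. Consequently, ρ[𝒜,Σ]^{T₂} is positive semidefinite if and only if every Ã^k is positive semidefinite. -/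

import Mathlib

open ComplexOrder

/-- The CDP matrix of `A` and a permutation `σ`. -/
def cdpMatrix {n : ℕ} (A : Matrix (Fin n) (Fin n) ℂ) (σ : Equiv.Perm (Fin n)) :
    Matrix (Fin n × Fin n) (Fin n × Fin n) ℂ :=
  Matrix.of fun x y => if x.2 = σ x.1 ∧ y.2 = σ y.1 then A x.1 y.1 else 0

/-- The partial transpose (on the second factor) of a matrix indexed by `Fin n × Fin n`. -/
def ptranspose {n : ℕ} (X : Matrix (Fin n × Fin n) (Fin n × Fin n) ℂ) :
    Matrix (Fin n × Fin n) (Fin n × Fin n) ℂ :=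
  Matrix.of fun x y => X (x.1, y.2) (y.1, x.2)

/-!
Evaluating `σ_i σ_j = σ_j σ_i` at `0` gives `σ_i(j) = σ_j(i)`, hence `σ_k(ξ i) = σ_i⁻¹(k)`.
In the partial transpose, the entry at `((i,p),(j,q))` collects the `k` with `q = σ_k(i)` and
`p = σ_k(j)`; substituting `k ↦ σ_j σ_i k` turns this into the CDP form for `Σ'`.
A sum of CDP matrices `∑ₖ ρ[Fᵏ, τ_k]` in which every `k ↦ τ_k(i)` is a bijection is the block
diagonal matrix `diag(F⁰, …, Fⁿ⁻¹)` with rows and columns permuted simultaneously, so it is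
positive semidefinite iff every `Fᵏ` is.
-/

open Matrix Equiv

theorem Matrix.posSemidef_blockDiagonal_iff {𝕜 m o : Type*} [RCLike 𝕜] [Fintype m] [Fintype o]
    [DecidableEq m] [DecidableEq o] (M : o → Matrix m m 𝕜) :
    (blockDiagonal M).PosSemidef ↔ ∀ k, (M k).PosSemidef := by
  refine ⟨fun h k => ?_, fun h => ?_⟩
  · convert h.submatrix (fun i => (i, k)) using 1
    ext i j
    simp [blockDiagonal_apply]
  · open scoped MatrixOrder in
    choose B hB using fun k => CStarAlgebra.nonneg_iff_eq_star_mul_self.mp (h k).nonneg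
    have hM : blockDiagonal M = (blockDiagonal B)ᴴ * blockDiagonal B := by
      rw [blockDiagonal_conjTranspose, ← blockDiagonal_mul]
      exact congrArg _ (funext hB)
    exact hM ▸ posSemidef_conjTranspose_mul_self _

theorem Equiv.Perm.apply_comm_of_commute {α : Type*} {σ : α → Perm α} {x₀ : α}
    (hnorm : ∀ i, σ i x₀ = i) (hab : ∀ i j, Commute (σ i) (σ j)) (i j : α) : σ i j = σ j i := by
  simpa only [Perm.mul_apply, hnorm] using congrArg (· x₀) (hab i j).eq

section CDP

variable {n : ℕ}

theorem sum_cdpMatrix_apply (A : Fin n → Matrix (Fin n) (Fin n) ℂ) (τ : Fin n → Perm (Fin n))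
    (x y : Fin n × Fin n) :
    (∑ k, cdpMatrix (A k) (τ k)) x y =
      ∑ k, if x.2 = τ k x.1 ∧ y.2 = τ k y.1 then A k x.1 y.1 else 0 := by
  simp [cdpMatrix, Matrix.sum_apply]

theorem sum_cdpMatrix_eq_submatrix_blockDiagonal (A : Fin n → Matrix (Fin n) (Fin n) ℂ)
    (τ e : Fin n → Perm (Fin n)) (he : ∀ k i, τ k i = e i k) :
    ∑ k, cdpMatrix (A k) (τ k) =
      (blockDiagonal A).submatrix (prodShear (.refl _) fun i => (e i).symm)
        (prodShear (.refl _) fun i => (e i).symm) := by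
  ext ⟨i, p⟩ ⟨j, q⟩
  rw [sum_cdpMatrix_apply, Fintype.sum_eq_single ((e i).symm p)]
  · simp only [he, apply_symm_apply, true_and, submatrix_apply, prodShear_apply, refl_apply,
      blockDiagonal_apply, Equiv.eq_symm_apply, eq_comm (a := q)]
  · rintro k hk
    simp only [he, ite_eq_right_iff, and_imp]
    rintro rfl
    simp at hk

theorem posSemidef_sum_cdpMatrix_iff (A : Fin n → Matrix (Fin n) (Fin n) ℂ)
    (τ e : Fin n → Perm (Fin n)) (he : ∀ k i, τ k i = e i k) :
    (∑ k, cdpMatrix (A k) (τ k)).PosSemidef ↔ ∀ k, (A k).PosSemidef := by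
  rw [sum_cdpMatrix_eq_submatrix_blockDiagonal A τ e he, posSemidef_submatrix_equiv,
    posSemidef_blockDiagonal_iff]

theorem ptranspose_sum_cdpMatrix (A : Fin n → Matrix (Fin n) (Fin n) ℂ)
    (σ τ : Fin n → Perm (Fin n)) (hsymm : ∀ i j, σ i j = σ j i)
    (hab : ∀ i j, Commute (σ i) (σ j)) (hτ : ∀ k i, τ k i = (σ i)⁻¹ k) :
    ptranspose (∑ k, cdpMatrix (A k) (σ k)) =
      ∑ k, cdpMatrix (of fun i j => A ((σ i)⁻¹ ((σ j)⁻¹ k)) i j) (τ k) := by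
  ext ⟨i, p⟩ ⟨j, q⟩
  rw [ptranspose, of_apply, sum_cdpMatrix_apply, sum_cdpMatrix_apply]
  refine Fintype.sum_equiv (σ j * σ i) _ _ fun k => ?_
  have hi : (σ i)⁻¹ ((σ j * σ i) k) = σ k j := by
    rw [(hab j i).eq, Perm.mul_apply, Perm.coe_inv, symm_apply_apply, hsymm]
  have hj : (σ j)⁻¹ ((σ j * σ i) k) = σ k i := by
    rw [Perm.mul_apply, Perm.coe_inv, symm_apply_apply, hsymm]
  have hk : (σ i)⁻¹ (σ k i) = k := by
    rw [hsymm, Perm.coe_inv, symm_apply_apply]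
  simp only [hτ, hi, hj, hk, of_apply]
  exact if_congr and_comm rfl rfl

end CDP

theorem ptranspose_cdpMatrix_abelian_general {n : ℕ} [NeZero n] (σ : Fin n → Equiv.Perm (Fin n))
    (hnorm : ∀ i, σ i 0 = i)
    (hab : ∀ i j, σ i * σ j = σ j * σ i)
    (ξ : Equiv.Perm (Fin n)) (hξ : ∀ i, σ (ξ i) = (σ i)⁻¹)
    (A : Fin n → Matrix (Fin n) (Fin n) ℂ) :
    (ptranspose (∑ k, cdpMatrix (A k) (σ k)) =
      ∑ k, cdpMatrix (Matrix.of fun i j => A ((σ i)⁻¹ ((σ j)⁻¹ k)) i j) (σ k * ξ)) ∧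
    ((ptranspose (∑ k, cdpMatrix (A k) (σ k))).PosSemidef ↔
      ∀ k, (Matrix.of fun i j => A ((σ i)⁻¹ ((σ j)⁻¹ k)) i j :
        Matrix (Fin n) (Fin n) ℂ).PosSemidef) := by
  have hsymm : ∀ i j, σ i j = σ j i := Perm.apply_comm_of_commute hnorm hab
  have hσ' : ∀ k i, (σ k * ξ) i = (σ i)⁻¹ k := fun k i => by
    rw [Perm.mul_apply, hsymm, hξ]
  have htranspose := ptranspose_sum_cdpMatrix A σ _ hsymm hab hσ'
  exact ⟨htranspose, htranspose ▸ posSemidef_sum_cdpMatrix_iff _ _ _ hσ'⟩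

/-- For an abelian maximal CDP family, the partial transpose of `ρ[𝒜,Σ]` is the CDP matrix
`ρ[𝒜̃,Σ']` where `σ'_k = σ_k ∘ ξ` (with `σ_{ξ(i)} = σ_i⁻¹`) and
`(Ã^k)_{ij} = a_{ij}^{σ_i⁻¹(σ_j⁻¹(k))}`; consequently `ρ[𝒜,Σ]^{T₂}` is positive
semidefinite iff every `Ã^k` is. -/
theorem ptranspose_cdpMatrix_abelian {n : ℕ} [NeZero n] (σ : Fin n → Equiv.Perm (Fin n))
    (hcdp : ∀ i j, i ≠ j → ∀ k, σ i k ≠ σ j k)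
    (hnorm : ∀ i, σ i 0 = i)
    (hab : ∀ i j, σ i * σ j = σ j * σ i)
    (ξ : Equiv.Perm (Fin n)) (hξ : ∀ i, σ (ξ i) = (σ i)⁻¹)
    (A : Fin n → Matrix (Fin n) (Fin n) ℂ) :
    (ptranspose (∑ k, cdpMatrix (A k) (σ k)) =
      ∑ k, cdpMatrix (Matrix.of fun i j => A ((σ i)⁻¹ ((σ j)⁻¹ k)) i j) (σ k * ξ)) ∧
    ((ptranspose (∑ k, cdpMatrix (A k) (σ k))).PosSemidef ↔
      ∀ k, (Matrix.of fun i j => A ((σ i)⁻¹ ((σ j)⁻¹ k)) i j :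
        Matrix (Fin n) (Fin n) ℂ).PosSemidef) :=
  ptranspose_cdpMatrix_abelian_general σ hnorm hab ξ hξ A
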